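/- arXiv:1601.00722 — 2 statements merged into one kernel-verified Lean document; each statement's English description precedes it below -/
import Mathlib

section
/- Fix positive integers $I,J,K,L$, parameters $U \in \mathbb{R}^{K\times I}$, $V \in \mathbb{R}^{L\times J}$, $B \in \mathbb{R}^{I\times J}$, $C \in \mathbb{R}^{K\times L}$, the MVRBM energy $E(X,Y) = -\mathrm{tr}(U^T Y V X^T) - \mathrm{tr}(X^T B) - \mathrm{tr}(Y^T C)$, and a fixed index $(i_0,j_0)$. Then for every fixed $Y \in \{0,1\}^{K\times L}$, the sum of $\exp(-E(X,Y))$ over all binary matrices $X \in \{0,1\}^{I\times J}$ whose $(i_0,j_0)$ entry equals $1$ is $\exp(\mathrm{tr}(Y^T C)) \exp(m_{i_0 j_0}) \prod_{(i,j)\neq(i_0,j_0)} (1 + \exp(m_{ij}))$, where $m_{ij} = b_{ij} + \sum_{k,l} y_{kl} u_{ki} v_{lj}$. -/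
open Matrix Finset Real

noncomputable section

/-- Interpret a Boolean matrix as a real 0/1 matrix. -/
def toR {m n : Type*} (b : Matrix m n Bool) : Matrix m n ℝ :=
  Matrix.of fun i j => if b i j then (1 : ℝ) else 0

/-- The MVRBM energy `E(X,Y;Θ) = -tr(Uᵀ Y V Xᵀ) - tr(Xᵀ B) - tr(Yᵀ C)`. -/
def mvrbmEnergy {I J K L : ℕ} (U : Matrix (Fin K) (Fin I) ℝ) (V : Matrix (Fin L) (Fin J) ℝ)
    (B : Matrix (Fin I) (Fin J) ℝ) (C : Matrix (Fin K) (Fin L) ℝ)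
    (X : Matrix (Fin I) (Fin J) ℝ) (Y : Matrix (Fin K) (Fin L) ℝ) : ℝ :=
  -(Uᵀ * Y * V * Xᵀ).trace - (Xᵀ * B).trace - (Yᵀ * C).trace

/-- for fixed binary `Y` and a fixed index `(i₀,j₀)`, summing `exp(-E(X,Y))`
over the binary matrices `X` whose `(i₀,j₀)` entry equals `1` gives
`exp(tr(Yᵀ C)) exp(m_{i₀j₀}) ∏_{(i,j) ≠ (i₀,j₀)} (1 + exp(m_{ij}))`, where
`m_{ij} = b_{ij} + ∑_{k,l} y_{kl} u_{ki} v_{lj}`. -/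
theorem mvrbm_visible_clamped_sum_factorizes {I J K L : ℕ}
    (hI : 0 < I) (hJ : 0 < J) (hK : 0 < K) (hL : 0 < L)
    (U : Matrix (Fin K) (Fin I) ℝ) (V : Matrix (Fin L) (Fin J) ℝ)
    (B : Matrix (Fin I) (Fin J) ℝ) (C : Matrix (Fin K) (Fin L) ℝ)
    (Y : Matrix (Fin K) (Fin L) Bool) (i₀ : Fin I) (j₀ : Fin J)
    (m : Fin I → Fin J → ℝ)
    (hm : ∀ i j, m i j = B i j + ∑ k, ∑ l, toR Y k l * U k i * V l j) :
    ∑ X ∈ Finset.univ.filter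
        (fun X : Matrix (Fin I) (Fin J) Bool => X i₀ j₀ = true),
        Real.exp (-(mvrbmEnergy U V B C (toR X) (toR Y)))
      = Real.exp (((toR Y)ᵀ * C).trace) * Real.exp (m i₀ j₀) *
          ∏ p ∈ Finset.univ.filter (fun p : Fin I × Fin J => p ≠ (i₀, j₀)),
            (1 + Real.exp (m p.1 p.2)) := by
  have energy : ∀ X : Matrix (Fin I) (Fin J) Bool,
      -(mvrbmEnergy U V B C (toR X) (toR Y))
        = ((toR Y)ᵀ * C).trace + ∑ p : Fin I × Fin J, toR X p.1 p.2 * m p.1 p.2 := by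
    intro X
    have key : ∀ i j, (∑ l, (∑ k, U k i * toR Y k l) * V l j) * toR X i j
        = toR X i j * ∑ k, ∑ l, toR Y k l * U k i * V l j := by
      intro i j
      simp only [Finset.sum_mul, Finset.mul_sum]
      rw [Finset.sum_comm]
      exact Finset.sum_congr rfl fun k _ => Finset.sum_congr rfl fun l _ => by ring
    simp only [mvrbmEnergy, Matrix.trace, Matrix.diag, Matrix.mul_apply, Matrix.transpose_apply,
      Fintype.sum_prod_type, hm, key, mul_add, Finset.sum_add_distrib]
    rw [Finset.sum_comm (f := fun (x : Fin J) (x1 : Fin I) => toR X x1 x * B x1 x)]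
    ring
  set F : Fin I × Fin J → Bool → ℝ := fun p b =>
    if p = (i₀, j₀) then (if b then Real.exp (m p.1 p.2) else 0)
    else Real.exp (if b then m p.1 p.2 else 0) with hF
  have step1 : ∀ X : Matrix (Fin I) (Fin J) Bool,
      (if X i₀ j₀ = true then Real.exp (-(mvrbmEnergy U V B C (toR X) (toR Y))) else 0)
      = Real.exp (((toR Y)ᵀ * C).trace) * ∏ p : Fin I × Fin J, F p (X p.1 p.2) := by
    intro X
    by_cases hX : X i₀ j₀ = true
    · rw [if_pos hX, energy, Real.exp_add, Real.exp_sum]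
      congr 1
      refine Finset.prod_congr rfl fun p _ => ?_
      by_cases hp : p = (i₀, j₀)
      · subst hp
        simp [hF, toR, hX]
      · simp only [hF, toR, Matrix.of_apply, if_neg hp]
        by_cases hb : X p.1 p.2 <;> simp [hb]
    · rw [if_neg hX]
      rw [Finset.prod_eq_zero (Finset.mem_univ (i₀, j₀))]
      · ring
      · simp only [hF, if_pos rfl]
        simp [Bool.not_eq_true] at hX
        simp [hX]
  calc ∑ X ∈ Finset.univ.filter
        (fun X : Matrix (Fin I) (Fin J) Bool => X i₀ j₀ = true),
        Real.exp (-(mvrbmEnergy U V B C (toR X) (toR Y)))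
      = ∑ X : Matrix (Fin I) (Fin J) Bool,
          (if X i₀ j₀ = true then Real.exp (-(mvrbmEnergy U V B C (toR X) (toR Y))) else 0) := by
        rw [Finset.sum_filter]
    _ = Real.exp (((toR Y)ᵀ * C).trace) *
          ∑ X : Matrix (Fin I) (Fin J) Bool, ∏ p : Fin I × Fin J, F p (X p.1 p.2) := by
        rw [Finset.mul_sum]; exact Finset.sum_congr rfl fun X _ => step1 X
    _ = Real.exp (((toR Y)ᵀ * C).trace) *
          ∑ g : Fin I × Fin J → Bool, ∏ p : Fin I × Fin J, F p (g p) := by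
        congr 1
        exact (Fintype.sum_equiv (Equiv.curry (Fin I) (Fin J) Bool)
          (fun g => ∏ p : Fin I × Fin J, F p (g p))
          (fun X => ∏ p : Fin I × Fin J, F p (X p.1 p.2)) fun g => rfl).symm
    _ = Real.exp (((toR Y)ᵀ * C).trace) * ∏ p : Fin I × Fin J, ∑ b : Bool, F p b := by
        congr 1
        rw [Finset.prod_univ_sum, Fintype.piFinset_univ]
    _ = Real.exp (((toR Y)ᵀ * C).trace) * Real.exp (m i₀ j₀) *
          ∏ p ∈ Finset.univ.filter (fun p : Fin I × Fin J => p ≠ (i₀, j₀)),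
            (1 + Real.exp (m p.1 p.2)) := by
        rw [Finset.prod_eq_mul_prod_sdiff_singleton_of_mem (Finset.mem_univ (i₀, j₀))]
        rw [show (Finset.univ : Finset (Fin I × Fin J)) \ {(i₀, j₀)}
            = Finset.univ.filter (fun p : Fin I × Fin J => p ≠ (i₀, j₀)) by
          ext p; simp [Finset.mem_sdiff]]
        rw [show ∑ b : Bool, F (i₀, j₀) b = Real.exp (m i₀ j₀) by simp [hF]]
        rw [mul_assoc]
        congr 2
        refine Finset.prod_congr rfl fun p hp => ?_
        simp only [Finset.mem_filter] at hp
        simp [hF, hp.2, add_comm]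
end
end

section
/- Fix positive integers $I,J,K,L,N$, parameters $U \in \mathbb{R}^{K\times I}$, $V \in \mathbb{R}^{L\times J}$, $B \in \mathbb{R}^{I\times J}$, $C \in \mathbb{R}^{K\times L}$, training data $X_1,\dots,X_N \in \{0,1\}^{I\times J}$, the energy $E(X,Y) = -\mathrm{tr}(U^T Y V X^T) - \mathrm{tr}(X^T B) - \mathrm{tr}(Y^T C)$, and the log-likelihood $\ell = \frac{1}{N}\sum_{n=1}^N \log\big(\sum_{Y} e^{-E(X_n,Y)}\big) - \log\big(\sum_{X',Y'} e^{-E(X',Y')}\big)$ viewed as a function of the weight entry $u_{k_0 i_0}$. Then, with $\sigma$ applied entrywise and $p(X) = \sum_{Y} e^{-E(X,Y)} / \sum_{X',Y'} e^{-E(X',Y')}$ the marginal distribution of the visible matrix, $\frac{\partial \ell}{\partial u_{k_0 i_0}} = \frac{1}{N}\sum_{n=1}^N \big(\sigma(U X_n V^T + C)\, V\, X_n^T\big)_{k_0 i_0} - \sum_{X \in \{0,1\}^{I\times J}} p(X) \big(\sigma(U X V^T + C)\, V\, X^T\big)_{k_0 i_0}$, where $\sigma(x)=1/(1+e^{-x})$.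 -/
open Matrix Finset Real

noncomputable section

/-- The sigmoid function `σ(x) = 1/(1+e^{-x})`. -/
def sig (x : ℝ) : ℝ := 1 / (1 + Real.exp (-x))

/-- Entrywise sigmoid of a matrix. -/
def sigM {m n : Type*} (M : Matrix m n ℝ) : Matrix m n ℝ :=
  Matrix.of fun i j => sig (M i j)

/-!
The energy is affine in the entry `u_{k₀i₀}`, with slope `(Y V Xᵀ)_{k₀i₀}`, so both log-partition
sums differentiate to Gibbs averages of `(Y V Xᵀ)_{k₀i₀}`. For fixed `X` the Boltzmann weight
factorises over the entries of the hidden matrix, `-E = tr(XᵀB) + ∑ₖₗ Y_{kl} (U X Vᵀ + C)_{kl}`, so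
these entries are independent Bernoulli variables with means `σ((U X Vᵀ + C)_{kl})`; averaging
`Y V Xᵀ` over them gives `σ(U X Vᵀ + C) V Xᵀ`.
-/

theorem sig_mul_one_add_exp (x : ℝ) : sig x * (1 + exp x) = exp x := by
  rw [sig, one_div, inv_mul_eq_div, div_eq_iff (by positivity), mul_add, mul_one,
    ← Real.exp_add, add_neg_cancel, Real.exp_zero, add_comm]

@[simp]
theorem sigM_apply {m n : Type*} (M : Matrix m n ℝ) (i : m) (j : n) : sigM M i j = sig (M i j) :=
  rfl

theorem Finset.prod_prod_ite_and_eq {m n R : Type*} [Fintype m] [DecidableEq m] [Fintype n]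
    [DecidableEq n] [CommMonoid R] (g : m → n → R) (k₀ : m) (l₀ : n) :
    ∏ k, ∏ l, (if k = k₀ ∧ l = l₀ then g k l else 1) = g k₀ l₀ := by
  simp [ite_and, Finset.prod_ite_eq']

namespace Matrix

variable {m n : Type*}

theorem trace_transpose_mul_eq_sum [Fintype m] [Fintype n] {R : Type*} [AddCommMonoid R] [Mul R]
    (A M : Matrix m n R) : (Aᵀ * M).trace = ∑ k, ∑ l, A k l * M k l := by
  rw [trace, Finset.sum_comm]
  rfl

theorem sum_prod_prod_apply_eq_prod_prod_sum [Fintype m] [DecidableEq m] [Fintype n]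
    [DecidableEq n] {β R : Type*} [Fintype β] [CommSemiring R] (f : m → n → β → R) :
    ∑ Y : Matrix m n β, ∏ k, ∏ l, f k l (Y k l) = ∏ k, ∏ l, ∑ b, f k l b := by
  simp_rw [Fintype.prod_sum]
  rfl

variable [DecidableEq m] [DecidableEq n]

def updateEntry {α : Type*} (U : Matrix m n α) (k₀ : m) (i₀ : n) (t : α) : Matrix m n α :=
  of fun k i => if k = k₀ ∧ i = i₀ then t else U k i

@[simp]
theorem updateEntry_self {α : Type*} (U : Matrix m n α) (k₀ : m) (i₀ : n) :
    U.updateEntry k₀ i₀ (U k₀ i₀) = U := by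
  ext k i
  simp only [updateEntry, of_apply]
  split_ifs with h
  · rw [h.1, h.2]
  · rfl

theorem hasDerivAt_sum_updateEntry_mul [Fintype m] [Fintype n] (U W : Matrix m n ℝ) (k₀ : m)
    (i₀ : n) (t : ℝ) :
    HasDerivAt (fun t => ∑ k, ∑ i, U.updateEntry k₀ i₀ t k i * W k i) (W k₀ i₀) t := by
  have hterm : ∀ k i, HasDerivAt (fun t => U.updateEntry k₀ i₀ t k i * W k i)
      (if k = k₀ ∧ i = i₀ then W k i else 0) t := by
    intro k i
    by_cases h : k = k₀ ∧ i = i₀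
    · simpa [updateEntry, h] using (hasDerivAt_id t).mul_const (W k i)
    · simpa [updateEntry, h] using hasDerivAt_const t (U k i * W k i)
  refine (HasDerivAt.fun_sum fun k _ => HasDerivAt.fun_sum fun i _ => hterm k i).congr_deriv ?_
  simp [ite_and]

end Matrix

section BernoulliMatrix

variable {m n : Type*} [Fintype m] [DecidableEq m] [Fintype n] [DecidableEq n]

theorem sum_exp_bool_matrix (A : Matrix m n ℝ) :
    ∑ Y : Matrix m n Bool, exp (∑ k, ∑ l, toR Y k l * A k l) = ∏ k, ∏ l, (1 + exp (A k l)) := by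
  simp only [Real.exp_sum]
  exact (Matrix.sum_prod_prod_apply_eq_prod_prod_sum fun (k : m) (l : n) (b : Bool) =>
    exp ((if b then 1 else 0) * A k l)).trans (by simp [add_comm])

theorem sum_toR_mul_exp_bool_matrix (A : Matrix m n ℝ) (k₀ : m) (l₀ : n) :
    ∑ Y : Matrix m n Bool, toR Y k₀ l₀ * exp (∑ k, ∑ l, toR Y k l * A k l)
      = sig (A k₀ l₀) * ∑ Y : Matrix m n Bool, exp (∑ k, ∑ l, toR Y k l * A k l) := by
  have hfactor : ∀ Y : Matrix m n Bool, toR Y k₀ l₀ * exp (∑ k, ∑ l, toR Y k l * A k l)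
      = ∏ k, ∏ l, (if k = k₀ ∧ l = l₀ then toR Y k l else 1) * exp (toR Y k l * A k l) := by
    intro Y
    simp only [Finset.prod_mul_distrib, Real.exp_sum]
    rw [Finset.prod_prod_ite_and_eq (toR Y)]
  have hterm : ∀ k l, ∑ b : Bool,
      (if k = k₀ ∧ l = l₀ then (if b then 1 else 0) else 1) * exp ((if b then 1 else 0) * A k l)
        = (if k = k₀ ∧ l = l₀ then sig (A k l) else 1) * (1 + exp (A k l)) := by
    intro k l
    split_ifs <;> simp [sig_mul_one_add_exp, add_comm]
  rw [Finset.sum_congr rfl fun Y _ => hfactor Y, sum_exp_bool_matrix]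
  refine (Matrix.sum_prod_prod_apply_eq_prod_prod_sum fun (k : m) (l : n) (b : Bool) =>
    (if k = k₀ ∧ l = l₀ then (if b then 1 else 0) else 1) *
      exp ((if b then 1 else 0) * A k l)).trans ?_
  simp only [hterm, Finset.prod_mul_distrib]
  rw [Finset.prod_prod_ite_and_eq (fun k l => sig (A k l))]

end BernoulliMatrix

section Energy

variable {I J K L : ℕ} (U : Matrix (Fin K) (Fin I) ℝ) (V : Matrix (Fin L) (Fin J) ℝ)
  (B : Matrix (Fin I) (Fin J) ℝ) (C : Matrix (Fin K) (Fin L) ℝ)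
  (X : Matrix (Fin I) (Fin J) ℝ) (Y : Matrix (Fin K) (Fin L) ℝ)

theorem neg_mvrbmEnergy_eq_sum_U_mul :
    -mvrbmEnergy U V B C X Y
      = ∑ k, ∑ i, U k i * (Y * V * Xᵀ) k i + ((Xᵀ * B).trace + (Yᵀ * C).trace) := by
  rw [mvrbmEnergy, ← Matrix.trace_transpose_mul_eq_sum, Matrix.mul_assoc, Matrix.mul_assoc,
    Matrix.mul_assoc]
  ring

theorem neg_mvrbmEnergy_eq_sum_Y_mul :
    -mvrbmEnergy U V B C X Y
      = (Xᵀ * B).trace + ∑ k, ∑ l, Y k l * (U * X * Vᵀ + C) k l := by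
  have hcycle : (Uᵀ * Y * V * Xᵀ).trace = (Yᵀ * (U * X * Vᵀ)).trace := by
    rw [← Matrix.trace_transpose (Yᵀ * _), Matrix.trace_mul_comm]
    simp only [Matrix.transpose_mul, Matrix.transpose_transpose, Matrix.mul_assoc]
    rw [Matrix.trace_mul_comm V]
    simp only [Matrix.mul_assoc]
  rw [mvrbmEnergy, ← Matrix.trace_transpose_mul_eq_sum, Matrix.mul_add, Matrix.trace_add, hcycle]
  ring

theorem hasDerivAt_neg_mvrbmEnergy_updateEntry (k₀ : Fin K) (i₀ : Fin I) (t : ℝ) :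
    HasDerivAt (fun t => -mvrbmEnergy (U.updateEntry k₀ i₀ t) V B C X Y)
      ((Y * V * Xᵀ) k₀ i₀) t := by
  simp only [neg_mvrbmEnergy_eq_sum_U_mul]
  exact (U.hasDerivAt_sum_updateEntry_mul _ k₀ i₀ t).add_const _

end Energy

section MarginalWeight

variable {I J K L : ℕ} (U : Matrix (Fin K) (Fin I) ℝ) (V : Matrix (Fin L) (Fin J) ℝ)
  (B : Matrix (Fin I) (Fin J) ℝ) (C : Matrix (Fin K) (Fin L) ℝ) (X : Matrix (Fin I) (Fin J) Bool)

def marginalWeight : ℝ :=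
  ∑ Y : Matrix (Fin K) (Fin L) Bool, exp (-mvrbmEnergy U V B C (toR X) (toR Y))

theorem marginalWeight_pos : 0 < marginalWeight U V B C X :=
  Finset.sum_pos (fun _ _ => exp_pos _) Finset.univ_nonempty

theorem sum_toR_mul_exp_neg_mvrbmEnergy (k : Fin K) (l : Fin L) :
    ∑ Y : Matrix (Fin K) (Fin L) Bool, toR Y k l * exp (-mvrbmEnergy U V B C (toR X) (toR Y))
      = sig ((U * toR X * Vᵀ + C) k l) * marginalWeight U V B C X := by
  simp only [marginalWeight, neg_mvrbmEnergy_eq_sum_Y_mul, exp_add, mul_left_comm _ (exp _),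
    ← Finset.mul_sum]
  rw [sum_toR_mul_exp_bool_matrix]

theorem sum_entry_mul_exp_neg_mvrbmEnergy (k₀ : Fin K) (i₀ : Fin I) :
    ∑ Y : Matrix (Fin K) (Fin L) Bool,
        (toR Y * V * (toR X)ᵀ) k₀ i₀ * exp (-mvrbmEnergy U V B C (toR X) (toR Y))
      = (sigM (U * toR X * Vᵀ + C) * V * (toR X)ᵀ) k₀ i₀ * marginalWeight U V B C X := by
  have hentry : ∀ M : Matrix (Fin K) (Fin L) ℝ,
      (M * V * (toR X)ᵀ) k₀ i₀ = ∑ l, M k₀ l * (V * (toR X)ᵀ) l i₀ := fun M => by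
    rw [Matrix.mul_assoc, Matrix.mul_apply]
  simp only [hentry, Finset.sum_mul]
  rw [Finset.sum_comm]
  refine Finset.sum_congr rfl fun l _ => ?_
  rw [sigM_apply, mul_right_comm, ← sum_toR_mul_exp_neg_mvrbmEnergy, Finset.sum_mul]
  exact Finset.sum_congr rfl fun _ _ => by ring

end MarginalWeight

section LogLikelihood

variable {I J K L : ℕ} (U : Matrix (Fin K) (Fin I) ℝ) (V : Matrix (Fin L) (Fin J) ℝ)
  (B : Matrix (Fin I) (Fin J) ℝ) (C : Matrix (Fin K) (Fin L) ℝ) (k₀ : Fin K) (i₀ : Fin I)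

theorem hasDerivAt_marginalWeight_updateEntry (X : Matrix (Fin I) (Fin J) Bool) :
    HasDerivAt (fun t => marginalWeight (U.updateEntry k₀ i₀ t) V B C X)
      ((sigM (U * toR X * Vᵀ + C) * V * (toR X)ᵀ) k₀ i₀ * marginalWeight U V B C X)
      (U k₀ i₀) := by
  have h := HasDerivAt.fun_sum (u := Finset.univ) fun Y _ =>
    (hasDerivAt_neg_mvrbmEnergy_updateEntry U V B C (toR X) (toR Y) k₀ i₀ (U k₀ i₀)).exp
  rw [Matrix.updateEntry_self] at h
  refine h.congr_deriv ?_
  simp only [mul_comm (exp _), sum_entry_mul_exp_neg_mvrbmEnergy]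

theorem hasDerivAt_log_marginalWeight_updateEntry (X : Matrix (Fin I) (Fin J) Bool) :
    HasDerivAt (fun t => log (marginalWeight (U.updateEntry k₀ i₀ t) V B C X))
      ((sigM (U * toR X * Vᵀ + C) * V * (toR X)ᵀ) k₀ i₀) (U k₀ i₀) := by
  have hpos := marginalWeight_pos U V B C X
  refine ((hasDerivAt_marginalWeight_updateEntry U V B C k₀ i₀ X).log ?_).congr_deriv ?_
  · rw [Matrix.updateEntry_self]
    exact hpos.ne'
  · rw [Matrix.updateEntry_self, mul_div_assoc, div_self hpos.ne', mul_one]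

theorem hasDerivAt_log_sum_marginalWeight_updateEntry :
    HasDerivAt (fun t => log (∑ X, marginalWeight (U.updateEntry k₀ i₀ t) V B C X))
      (∑ X, marginalWeight U V B C X / (∑ X', marginalWeight U V B C X') *
        (sigM (U * toR X * Vᵀ + C) * V * (toR X)ᵀ) k₀ i₀) (U k₀ i₀) := by
  have hpos : 0 < ∑ X, marginalWeight U V B C X :=
    Finset.sum_pos (fun X _ => marginalWeight_pos U V B C X) Finset.univ_nonempty
  have h := (HasDerivAt.fun_sum (u := Finset.univ) fun X _ =>
    hasDerivAt_marginalWeight_updateEntry U V B C k₀ i₀ X).log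
  simp only [Matrix.updateEntry_self] at h
  refine (h hpos.ne').congr_deriv ?_
  rw [Finset.sum_div]
  exact Finset.sum_congr rfl fun X _ => by ring

end LogLikelihood

theorem mvrbm_loglik_derivative_U_general {I J K L N : ℕ}
    (U : Matrix (Fin K) (Fin I) ℝ) (V : Matrix (Fin L) (Fin J) ℝ)
    (B : Matrix (Fin I) (Fin J) ℝ) (C : Matrix (Fin K) (Fin L) ℝ)
    (Xs : Fin N → Matrix (Fin I) (Fin J) Bool) (k₀ : Fin K) (i₀ : Fin I)
    -- `Uu t` is `U` with the single entry `u_{k₀i₀}` replaced by `t`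
    (Uu : ℝ → Matrix (Fin K) (Fin I) ℝ)
    (hUu : ∀ t, Uu t = Matrix.of fun k i => if k = k₀ ∧ i = i₀ then t else U k i)
    -- the marginal distribution `p(X)` of the visible matrix
    (p : Matrix (Fin I) (Fin J) Bool → ℝ)
    (hp : ∀ X, p X =
      (∑ Y : Matrix (Fin K) (Fin L) Bool,
          Real.exp (-(mvrbmEnergy U V B C (toR X) (toR Y)))) /
        ∑ X' : Matrix (Fin I) (Fin J) Bool, ∑ Y' : Matrix (Fin K) (Fin L) Bool,
          Real.exp (-(mvrbmEnergy U V B C (toR X') (toR Y')))) :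
    deriv (fun t : ℝ =>
        (1 / (N : ℝ)) * ∑ n : Fin N,
            Real.log (∑ Y : Matrix (Fin K) (Fin L) Bool,
              Real.exp (-(mvrbmEnergy (Uu t) V B C (toR (Xs n)) (toR Y))))
          - Real.log (∑ X' : Matrix (Fin I) (Fin J) Bool,
              ∑ Y' : Matrix (Fin K) (Fin L) Bool,
                Real.exp (-(mvrbmEnergy (Uu t) V B C (toR X') (toR Y'))))) (U k₀ i₀)
      = (1 / (N : ℝ)) * ∑ n : Fin N,
            (sigM (U * toR (Xs n) * Vᵀ + C) * V * (toR (Xs n))ᵀ) k₀ i₀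
        - ∑ X : Matrix (Fin I) (Fin J) Bool,
            p X * (sigM (U * toR X * Vᵀ + C) * V * (toR X)ᵀ) k₀ i₀ := by
  obtain rfl : Uu = U.updateEntry k₀ i₀ := funext hUu
  simp only [hp]
  have hdata := HasDerivAt.fun_sum (u := Finset.univ) fun n _ =>
    hasDerivAt_log_marginalWeight_updateEntry U V B C k₀ i₀ (Xs n)
  exact ((hdata.const_mul (1 / (N : ℝ))).sub
    (hasDerivAt_log_sum_marginalWeight_updateEntry U V B C k₀ i₀)).deriv

/-- the derivative of the log-likelihood with respect to the weight entry
`u_{k₀i₀}` equals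
`(1/N) ∑_n (σ(U Xₙ Vᵀ + C) V Xₙᵀ)_{k₀i₀} - ∑_X p(X) (σ(U X Vᵀ + C) V Xᵀ)_{k₀i₀}`. -/
theorem mvrbm_loglik_derivative_U {I J K L N : ℕ}
    (hI : 0 < I) (hJ : 0 < J) (hK : 0 < K) (hL : 0 < L) (hN : 0 < N)
    (U : Matrix (Fin K) (Fin I) ℝ) (V : Matrix (Fin L) (Fin J) ℝ)
    (B : Matrix (Fin I) (Fin J) ℝ) (C : Matrix (Fin K) (Fin L) ℝ)
    (Xs : Fin N → Matrix (Fin I) (Fin J) Bool) (k₀ : Fin K) (i₀ : Fin I)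
    -- `Uu t` is `U` with the single entry `u_{k₀i₀}` replaced by `t`
    (Uu : ℝ → Matrix (Fin K) (Fin I) ℝ)
    (hUu : ∀ t, Uu t = Matrix.of fun k i => if k = k₀ ∧ i = i₀ then t else U k i)
    -- the marginal distribution `p(X)` of the visible matrix
    (p : Matrix (Fin I) (Fin J) Bool → ℝ)
    (hp : ∀ X, p X =
      (∑ Y : Matrix (Fin K) (Fin L) Bool,
          Real.exp (-(mvrbmEnergy U V B C (toR X) (toR Y)))) /
        ∑ X' : Matrix (Fin I) (Fin J) Bool, ∑ Y' : Matrix (Fin K) (Fin L) Bool,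
          Real.exp (-(mvrbmEnergy U V B C (toR X') (toR Y')))) :
    deriv (fun t : ℝ =>
        (1 / (N : ℝ)) * ∑ n : Fin N,
            Real.log (∑ Y : Matrix (Fin K) (Fin L) Bool,
              Real.exp (-(mvrbmEnergy (Uu t) V B C (toR (Xs n)) (toR Y))))
          - Real.log (∑ X' : Matrix (Fin I) (Fin J) Bool,
              ∑ Y' : Matrix (Fin K) (Fin L) Bool,
                Real.exp (-(mvrbmEnergy (Uu t) V B C (toR X') (toR Y'))))) (U k₀ i₀)
      = (1 / (N : ℝ)) * ∑ n : Fin N,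
            (sigM (U * toR (Xs n) * Vᵀ + C) * V * (toR (Xs n))ᵀ) k₀ i₀
        - ∑ X : Matrix (Fin I) (Fin J) Bool,
            p X * (sigM (U * toR X * Vᵀ + C) * V * (toR X)ᵀ) k₀ i₀ :=
  mvrbm_loglik_derivative_U_general U V B C Xs k₀ i₀ Uu hUu p hp
end
end
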